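/- arXiv:2210.16880 — 3 statements merged into one kernel-verified Lean document; each statement's English description precedes it below -/
import Mathlib

section
/- Let p ∈ (0,1), let F ∈ F_1^+ be a cdf continuous at x_p := F^{-1}(p), and let F_n be the empirical cdf of independent random variables X_1, …, X_n, each with cdf F. Then Γ_p(F, F_n) converges to 0 in probability as n → ∞. -/
open scoped Topology ENNReal
open MeasureTheory ProbabilityTheory Filter Set

/-- The cumulative distribution function of a probability measure `μ` on `ℝ`. -/
noncomputable def cdfOf (μ : Measure ℝ) : ℝ → ℝ := fun x => (μ (Iic x)).toReal

/-- The quantile function of a cdf `F`: `F⁻¹(p) = inf {x : F x ≥ p}`. -/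
noncomputable def qtl (F : ℝ → ℝ) (p : ℝ) : ℝ := sInf {x | p ≤ F x}

/-- The "gap" functional
`Γ_p(F,G) = ∫_p^1 (F⁻¹(u) − G⁻¹(u)) du − ∫_{F⁻¹(p)}^∞ (G(x) − F(x)) dx`. -/
noncomputable def gapFun (p : ℝ) (F G : ℝ → ℝ) : ℝ :=
  (∫ u in p..1, (qtl F u - qtl G u)) - ∫ x in Ioi (qtl F p), (G x - F x)

/-- The empirical cdf `F_n` built from the first `n` of the random variables `X`,
at the sample point `ω`: `F_n(t) = (1/n) ∑_{i<n} 1{X_i(ω) ≤ t}`. -/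
noncomputable def empCdf {Ω : Type*} (X : ℕ → Ω → ℝ) (n : ℕ) (ω : Ω) : ℝ → ℝ :=
  fun t => (∑ i ∈ Finset.range n, if X i ω ≤ t then (1 : ℝ) else 0) / n


lemma qtl_le_iff {G : ℝ → ℝ} {u : ℝ} (hmono : Monotone G)
    (hne : {x | u ≤ G x}.Nonempty) (hbd : BddBelow {x | u ≤ G x})
    (hcl : IsClosed {x | u ≤ G x}) {x : ℝ} : qtl G u ≤ x ↔ u ≤ G x := by
  constructor
  · intro h
    have hmem : qtl G u ∈ {x | u ≤ G x} := hcl.csInf_mem hne hbd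
    exact le_trans hmem (hmono h)
  · intro h
    exact csInf_le hbd h

lemma isClosed_level {G : ℝ → ℝ} (hmono : Monotone G)
    (hrc : ∀ x, ContinuousWithinAt G (Ici x) x) (u : ℝ) :
    IsClosed {x | u ≤ G x} := by
  rw [← isOpen_compl_iff, isOpen_iff_mem_nhds]
  intro x hx
  simp only [mem_compl_iff, mem_setOf_eq, not_le] at hx
  have h1 : ∀ᶠ y in 𝓝[Ici x] x, G y < u :=
    (hrc x).eventually_lt continuousWithinAt_const hx
  obtain ⟨V, hV, hVsub⟩ := eventually_nhdsWithin_iff.mp h1 |>.exists_mem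
  filter_upwards [hV] with y hy
  simp only [mem_compl_iff, mem_setOf_eq, not_le]
  rcases le_or_gt y x with h | h
  · exact lt_of_le_of_lt (hmono h) hx
  · exact hVsub y hy h.le

lemma lintegral_qtl {G : ℝ → ℝ} {p : ℝ} (hp : p < 1) (hmono : Monotone G)
    (hgal : ∀ u, p ≤ u → u < 1 → ∀ x, (qtl G u ≤ x ↔ u ≤ G x)) :
    ∫⁻ u in Ioo p 1, ENNReal.ofReal (qtl G u - qtl G p)
      = ∫⁻ x in Ioi (qtl G p), ENNReal.ofReal (1 - G x) := by
  set c := qtl G p with hc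
  have hGmeas : Measurable G := hmono.measurable
  have hsetm : ∀ u : ℝ, MeasurableSet {x | G x < u} := fun u =>
    hGmeas measurableSet_Iio
  have step1 : ∀ u ∈ Ioo p 1, ENNReal.ofReal (qtl G u - c)
      = volume ({x | G x < u} ∩ Ioi c) := by
    intro u hu
    have hset : {x | G x < u} ∩ Ioi c = Ioo c (qtl G u) := by
      ext x
      simp only [mem_inter_iff, mem_setOf_eq, mem_Ioi, mem_Ioo]
      constructor
      · rintro ⟨h1, h2⟩
        refine ⟨h2, ?_⟩
        by_contra h
        push_neg at h
        exact absurd ((hgal u hu.1.le hu.2 x).mp h) (not_le.mpr h1)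
      · rintro ⟨h1, h2⟩
        refine ⟨?_, h1⟩
        by_contra h
        push_neg at h
        exact absurd ((hgal u hu.1.le hu.2 x).mpr h) (not_le.mpr h2)
    rw [hset, Real.volume_Ioo]
  rw [setLIntegral_congr_fun measurableSet_Ioo step1]
  have swap : ∫⁻ u in Ioo p 1, volume ({x | G x < u} ∩ Ioi c)
      = ∫⁻ x in Ioi c, volume ({u | G x < u} ∩ Ioo p 1) := by
    have h1 : ∀ u : ℝ, volume ({x | G x < u} ∩ Ioi c)
        = ∫⁻ x in Ioi c, (if G x < u then (1:ℝ≥0∞) else 0) := by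
      intro u
      have : (fun x => if G x < u then (1:ℝ≥0∞) else 0)
          = {x | G x < u}.indicator (fun _ => 1) := by
        ext x; simp [Set.indicator_apply]
      rw [this, lintegral_indicator (hsetm u), setLIntegral_one,
        Measure.restrict_apply (hsetm u)]
    have h2 : ∀ x : ℝ, volume ({u | G x < u} ∩ Ioo p 1)
        = ∫⁻ u in Ioo p 1, (if G x < u then (1:ℝ≥0∞) else 0) := by
      intro x
      have : (fun u => if G x < u then (1:ℝ≥0∞) else 0)
          = {u | G x < u}.indicator (fun _ => 1) := by
        ext u; simp [Set.indicator_apply]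
      have h3 : {u | G x < u} = Ioi (G x) := rfl
      rw [this, h3, lintegral_indicator measurableSet_Ioi, setLIntegral_one,
        Measure.restrict_apply measurableSet_Ioi]
    simp_rw [h1, h2]
    have hmeasf : Measurable (fun z : ℝ × ℝ => if G z.2 < z.1 then (1:ℝ≥0∞) else 0) := by
      refine Measurable.ite ?_ measurable_const measurable_const
      exact measurableSet_lt (hGmeas.comp measurable_snd) measurable_fst
    exact lintegral_lintegral_swap hmeasf.aemeasurable
  rw [swap]
  refine setLIntegral_congr_fun measurableSet_Ioi (fun x hx => ?_)
  have hpx : p ≤ G x := (hgal p le_rfl hp x).mp (le_of_lt hx)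
  have hset : {u | G x < u} ∩ Ioo p 1 = Ioo (G x) 1 := by
    ext u
    simp only [mem_inter_iff, mem_setOf_eq, mem_Ioo]
    constructor
    · rintro ⟨h1, _, h3⟩; exact ⟨h1, h3⟩
    · rintro ⟨h1, h2⟩; exact ⟨h1, lt_of_le_of_lt hpx h1, h2⟩
  rw [hset, Real.volume_Ioo]

section Det
variable {F G : ℝ → ℝ} {p m M : ℝ}

lemma det_bound (hp : p ∈ Ioo (0:ℝ) 1)
    (hFmono : Monotone F) (hFrc : ∀ x, ContinuousWithinAt F (Ici x) x)
    (hF0 : Tendsto F atBot (𝓝 0)) (hF1t : Tendsto F atTop (𝓝 1))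
    (hF1 : ∀ x, F x ≤ 1)
    (hFint : IntegrableOn (fun x => 1 - F x) (Ioi (qtl F p)) volume)
    (hGmono : Monotone G) (hGrc : ∀ x, ContinuousWithinAt G (Ici x) x)
    (hG0 : ∀ x, 0 ≤ G x) (hG1 : ∀ x, G x ≤ 1)
    (hGm : G m < p) (hGM : p ≤ G M)
    (hm : m ≤ qtl F p) (hM : qtl F p ≤ M)
    (hGb : ∃ b, ∀ x, b ≤ x → G x = 1) :
    |gapFun p F G| ≤ (M - m) * |G (qtl F p) - p| := by
  obtain ⟨b, hb⟩ := hGb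
  set xp := qtl F p with hxp
  set cn := qtl G p with hcn
  -- Galois connections
  have hFgal : ∀ u, p ≤ u → u < 1 → ∀ x, (qtl F u ≤ x ↔ u ≤ F x) := by
    intro u hpu hu1
    have hne : {x | u ≤ F x}.Nonempty := by
      obtain ⟨x, hx⟩ := (hF1t.eventually (eventually_gt_nhds hu1)).exists
      exact ⟨x, hx.le⟩
    have hbd : BddBelow {x | u ≤ F x} := by
      obtain ⟨x₀, hx₀⟩ := (hF0.eventually (eventually_lt_nhds (lt_of_lt_of_le hp.1 hpu))).exists
      refine ⟨x₀, fun y hy => ?_⟩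
      by_contra h
      push_neg at h
      exact absurd (le_trans hy (hFmono h.le)) (not_le.mpr hx₀)
    exact fun x => qtl_le_iff hFmono hne hbd (isClosed_level hFmono hFrc u)
  have hGgal : ∀ u, p ≤ u → u ≤ 1 → ∀ x, (qtl G u ≤ x ↔ u ≤ G x) := by
    intro u hpu hu1
    have hne : {x | u ≤ G x}.Nonempty := ⟨b, by simpa [hb b le_rfl] using hu1⟩
    have hbd : BddBelow {x | u ≤ G x} := by
      refine ⟨m, fun y hy => ?_⟩
      by_contra h
      push_neg at h
      exact absurd (le_trans hy (hGmono h.le)) (not_le.mpr (lt_of_lt_of_le hGm hpu))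
    exact fun x => qtl_le_iff hGmono hne hbd (isClosed_level hGmono hGrc u)
  have hGmeas : Measurable G := hGmono.measurable
  -- location of cn
  have hmcn : m < cn := by
    by_contra h
    push_neg at h
    exact absurd ((hGgal p le_rfl hp.2.le m).mp h) (not_le.mpr hGm)
  have hcnM : cn ≤ M := (hGgal p le_rfl hp.2.le M).mpr hGM
  -- integrability of 1 - G on any Ioi a
  have hGint : ∀ a : ℝ, IntegrableOn (fun x => 1 - G x) (Ioi a) volume := by
    intro a
    have h1 : IntegrableOn (fun x => 1 - G x) (Ioc a (max b a)) volume := by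
      refine Measure.integrableOn_of_bounded (M := 1) ?_ ?_ ?_
      · rw [Real.volume_Ioc]; exact ENNReal.ofReal_ne_top
      · exact (measurable_const.sub hGmeas).aestronglyMeasurable
      · refine ae_of_all _ fun x => ?_
        rw [Real.norm_eq_abs, abs_le]
        exact ⟨by linarith [hG1 x], by linarith [hG0 x]⟩
    have h2 : IntegrableOn (fun x => 1 - G x) (Ioi (max b a)) volume := by
      have : EqOn (fun x => 1 - G x) (fun _ => (0:ℝ)) (Ioi (max b a)) := by
        intro x hx
        have : G x = 1 := hb x (le_trans (le_max_left b a) (le_of_lt hx))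
        simp [this]
      exact (integrableOn_congr_fun this measurableSet_Ioi).mpr (integrableOn_zero)
    have hsub : Ioi a ⊆ Ioc a (max b a) ∪ Ioi (max b a) := by
      rw [Ioc_union_Ioi_eq_Ioi (le_max_right b a)]
    exact (h1.union h2).mono_set hsub
  -- lintegral identities
  have LF_eq := lintegral_qtl hp.2 hFmono hFgal
  have LG_eq := lintegral_qtl hp.2 hGmono (fun u h1 h2 x => hGgal u h1 h2.le x)
  rw [← hxp] at LF_eq
  rw [← hcn] at LG_eq
  -- finiteness of the two tail lintegrals
  have ofReal_le_nnnorm : ∀ r : ℝ, ENNReal.ofReal r ≤ (‖r‖₊ : ℝ≥0∞) := by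
    intro r
    rw [← enorm_eq_nnnorm, Real.enorm_eq_ofReal_abs]
    exact ENNReal.ofReal_le_ofReal (le_abs_self r)
  have hFtop : ∫⁻ x in Ioi xp, ENNReal.ofReal (1 - F x) < ⊤ :=
    lt_of_le_of_lt (lintegral_mono fun x => ofReal_le_nnnorm _) hFint.2
  have hGtop : ∀ a : ℝ, ∫⁻ x in Ioi a, ENNReal.ofReal (1 - G x) < ⊤ := fun a =>
    lt_of_le_of_lt (lintegral_mono fun x => ofReal_le_nnnorm _) (hGint a).2
  -- nonnegativity and monotonicity of quantile differences
  have hqF_lb : ∀ u ∈ Ioo p 1, xp ≤ qtl F u := by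
    intro u hu
    have h1 : u ≤ F (qtl F u) := (hFgal u hu.1.le hu.2 (qtl F u)).mp le_rfl
    exact (hFgal p le_rfl hp.2 (qtl F u)).mpr (le_trans hu.1.le h1)
  have hqG_lb : ∀ u ∈ Ioo p 1, cn ≤ qtl G u := by
    intro u hu
    have h1 : u ≤ G (qtl G u) := (hGgal u hu.1.le hu.2.le (qtl G u)).mp le_rfl
    exact (hGgal p le_rfl hp.2.le (qtl G u)).mpr (le_trans hu.1.le h1)
  have hqF_mono : MonotoneOn (fun u => qtl F u) (Ioo p 1) := by
    intro u hu v hv huv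
    have h1 : v ≤ F (qtl F v) := (hFgal v hv.1.le hv.2 (qtl F v)).mp le_rfl
    exact (hFgal u hu.1.le hu.2 (qtl F v)).mpr (le_trans huv h1)
  have hqG_mono : MonotoneOn (fun u => qtl G u) (Ioo p 1) := by
    intro u hu v hv huv
    have h1 : v ≤ G (qtl G v) := (hGgal v hv.1.le hv.2.le (qtl G v)).mp le_rfl
    exact (hGgal u hu.1.le hu.2.le (qtl G v)).mpr (le_trans huv h1)
  -- integrability of quantile functions
  have hIF : IntegrableOn (fun u => qtl F u - xp) (Ioo p 1) volume := by
    have hae : AEMeasurable (fun u => qtl F u) (volume.restrict (Ioo p 1)) :=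
      aemeasurable_restrict_of_monotoneOn measurableSet_Ioo hqF_mono
    refine ⟨((hae.sub aemeasurable_const).aestronglyMeasurable), ?_⟩
    have hnn : 0 ≤ᵐ[volume.restrict (Ioo p 1)] fun u => qtl F u - xp :=
      (ae_restrict_iff' measurableSet_Ioo).2 (ae_of_all _ fun u hu => by
        simpa [sub_nonneg] using hqF_lb u hu)
    rw [hasFiniteIntegral_iff_ofReal hnn]
    rw [show (∫⁻ u, ENNReal.ofReal (qtl F u - xp) ∂(volume.restrict (Ioo p 1)))
        = ∫⁻ u in Ioo p 1, ENNReal.ofReal (qtl F u - xp) from rfl, LF_eq]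
    exact hFtop
  have hIG : IntegrableOn (fun u => qtl G u - cn) (Ioo p 1) volume := by
    have hae : AEMeasurable (fun u => qtl G u) (volume.restrict (Ioo p 1)) :=
      aemeasurable_restrict_of_monotoneOn measurableSet_Ioo hqG_mono
    refine ⟨((hae.sub aemeasurable_const).aestronglyMeasurable), ?_⟩
    have hnn : 0 ≤ᵐ[volume.restrict (Ioo p 1)] fun u => qtl G u - cn :=
      (ae_restrict_iff' measurableSet_Ioo).2 (ae_of_all _ fun u hu => by
        simpa [sub_nonneg] using hqG_lb u hu)
    rw [hasFiniteIntegral_iff_ofReal hnn]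
    rw [show (∫⁻ u, ENNReal.ofReal (qtl G u - cn) ∂(volume.restrict (Ioo p 1)))
        = ∫⁻ u in Ioo p 1, ENNReal.ofReal (qtl G u - cn) from rfl, LG_eq]
    exact hGtop cn
  -- real-valued tail identities
  have AF : ∫ u in Ioo p 1, (qtl F u - xp) = ∫ x in Ioi xp, (1 - F x) := by
    rw [integral_eq_lintegral_of_nonneg_ae
        ((ae_restrict_iff' measurableSet_Ioo).2 (ae_of_all _ fun u hu => by
          simpa [sub_nonneg] using hqF_lb u hu)) hIF.1,
      integral_eq_lintegral_of_nonneg_ae (f := fun x => 1 - F x)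
        ((ae_restrict_iff' measurableSet_Ioi).2 (ae_of_all _ fun x _ => by
          simpa [sub_nonneg] using hF1 x))
        (measurable_const.sub hFmono.measurable).aestronglyMeasurable,
      ← LF_eq]
  have AG : ∫ u in Ioo p 1, (qtl G u - cn) = ∫ x in Ioi cn, (1 - G x) := by
    rw [integral_eq_lintegral_of_nonneg_ae
        ((ae_restrict_iff' measurableSet_Ioo).2 (ae_of_all _ fun u hu => by
          simpa [sub_nonneg] using hqG_lb u hu)) hIG.1,
      integral_eq_lintegral_of_nonneg_ae (f := fun x => 1 - G x)
        ((ae_restrict_iff' measurableSet_Ioi).2 (ae_of_all _ fun x _ => by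
          simpa [sub_nonneg] using hG1 x))
        (measurable_const.sub hGmeas).aestronglyMeasurable,
      ← LG_eq]
  -- the first half of the gap
  have E1 : ∫ u in p..1, (qtl F u - qtl G u)
      = (∫ x in Ioi xp, (1 - F x)) - (∫ x in Ioi cn, (1 - G x)) + (xp - cn) * (1 - p) := by
    rw [intervalIntegral.integral_of_le hp.2.le, integral_Ioc_eq_integral_Ioo]
    have hfun : (fun u => qtl F u - qtl G u)
        = fun u => ((qtl F u - xp) - (qtl G u - cn)) + (xp - cn) := by
      funext u; ring
    rw [hfun]
    have hconstI : IntegrableOn (fun _ : ℝ => xp - cn) (Ioo p 1) volume :=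
      integrableOn_const (by rw [Real.volume_Ioo]; exact ENNReal.ofReal_ne_top)
    have hadd : ∫ u in Ioo p 1, ((qtl F u - xp) - (qtl G u - cn) + (xp - cn))
        = (∫ u in Ioo p 1, ((qtl F u - xp) - (qtl G u - cn))) + ∫ _u in Ioo p 1, (xp - cn) :=
      integral_add (hIF.sub hIG) hconstI
    have hsub : ∫ u in Ioo p 1, ((qtl F u - xp) - (qtl G u - cn))
        = (∫ u in Ioo p 1, (qtl F u - xp)) - ∫ u in Ioo p 1, (qtl G u - cn) :=
      integral_sub hIF hIG
    rw [hadd, hsub, AF, AG, setIntegral_const, Real.volume_real_Ioo_of_le hp.2.le,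
      smul_eq_mul]
    ring
  -- the second half
  have E2 : ∫ x in Ioi xp, (G x - F x)
      = (∫ x in Ioi xp, (1 - F x)) - (∫ x in Ioi xp, (1 - G x)) := by
    rw [← integral_sub hFint (hGint xp)]
    congr 1
    funext x
    ring
  have EG : gapFun p F G
      = (xp - cn) * (1 - p) + (∫ x in Ioi xp, (1 - G x)) - (∫ x in Ioi cn, (1 - G x)) := by
    simp only [gapFun, ← hxp, ← hcn]
    rw [E1, E2]
    ring
  rcases le_or_gt cn xp with hcase | hcase
  · -- cn ≤ xp
    have hsplit : (∫ x in Ioi cn, (1 - G x))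
        = (∫ x in Ioc cn xp, (1 - G x)) + ∫ x in Ioi xp, (1 - G x) := by
      rw [← Ioc_union_Ioi_eq_Ioi hcase]
      exact setIntegral_union (Ioc_disjoint_Ioi le_rfl) measurableSet_Ioi
        ((hGint cn).mono_set Ioc_subset_Ioi_self) (hGint xp)
    have hIcc : IntegrableOn (fun x => 1 - G x) (Ioc cn xp) volume :=
      (hGint cn).mono_set Ioc_subset_Ioi_self
    have hIconst : IntegrableOn (fun _ : ℝ => (1 : ℝ) - p) (Ioc cn xp) volume :=
      integrableOn_const (by rw [Real.volume_Ioc]; exact ENNReal.ofReal_ne_top)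
    have hconst : (xp - cn) * (1 - p) = ∫ _x in Ioc cn xp, ((1:ℝ) - p) := by
      rw [setIntegral_const, Real.volume_real_Ioc_of_le hcase,
        smul_eq_mul]
    have EΓ : gapFun p F G = ∫ x in Ioc cn xp, (G x - p) := by
      rw [EG, hsplit]
      have harith : ∀ A B C : ℝ, (xp - cn) * (1 - p) + B - (C + B)
          = (xp - cn) * (1 - p) - C := by intro A B C; ring
      rw [harith 0, hconst, ← integral_sub hIconst hIcc]
      congr 1
      funext x
      ring
    have h0 : 0 ≤ gapFun p F G := by
      rw [EΓ]
      refine setIntegral_nonneg measurableSet_Ioc fun x hx => ?_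
      have : p ≤ G x := (hGgal p le_rfl hp.2.le x).mp hx.1.le
      linarith
    have hGxp : p ≤ G xp := (hGgal p le_rfl hp.2.le xp).mp hcase
    have h1 : gapFun p F G ≤ (xp - cn) * (G xp - p) := by
      rw [EΓ]
      have hIGp : IntegrableOn (fun x => G x - p) (Ioc cn xp) volume := by
        have hfun2 : (fun x => G x - p) = fun x => (1 - p) - (1 - G x) := by funext x; ring
        rw [hfun2]; exact hIconst.sub hIcc
      have hIc2 : IntegrableOn (fun _ : ℝ => G xp - p) (Ioc cn xp) volume :=
        integrableOn_const (by rw [Real.volume_Ioc]; exact ENNReal.ofReal_ne_top)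
      have hmono2 : ∫ x in Ioc cn xp, (G x - p) ≤ ∫ _x in Ioc cn xp, (G xp - p) :=
        setIntegral_mono_on hIGp hIc2 measurableSet_Ioc
          (fun x hx => by have := hGmono hx.2; linarith)
      calc ∫ x in Ioc cn xp, (G x - p) ≤ ∫ _x in Ioc cn xp, (G xp - p) := hmono2
        _ = (xp - cn) * (G xp - p) := by
            rw [setIntegral_const, Real.volume_real_Ioc_of_le hcase,
              smul_eq_mul]
    rw [abs_of_nonneg h0, abs_of_nonneg (by linarith : (0:ℝ) ≤ G xp - p)]
    calc gapFun p F G ≤ (xp - cn) * (G xp - p) := h1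
      _ ≤ (M - m) * (G xp - p) := by
          apply mul_le_mul_of_nonneg_right (by linarith) (by linarith)
  · -- xp < cn
    have hsplit : (∫ x in Ioi xp, (1 - G x))
        = (∫ x in Ioc xp cn, (1 - G x)) + ∫ x in Ioi cn, (1 - G x) := by
      rw [← Ioc_union_Ioi_eq_Ioi hcase.le]
      exact setIntegral_union (Ioc_disjoint_Ioi le_rfl) measurableSet_Ioi
        ((hGint xp).mono_set Ioc_subset_Ioi_self) (hGint cn)
    have hIcc : IntegrableOn (fun x => 1 - G x) (Ioc xp cn) volume :=
      (hGint xp).mono_set Ioc_subset_Ioi_self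
    have hIconst : IntegrableOn (fun _ : ℝ => (1 : ℝ) - p) (Ioc xp cn) volume :=
      integrableOn_const (by rw [Real.volume_Ioc]; exact ENNReal.ofReal_ne_top)
    have hconst : (cn - xp) * (1 - p) = ∫ _x in Ioc xp cn, ((1:ℝ) - p) := by
      rw [setIntegral_const, Real.volume_real_Ioc_of_le hcase.le,
        smul_eq_mul]
    have EΓ : gapFun p F G = ∫ x in Ioo xp cn, (p - G x) := by
      rw [EG, hsplit]
      have harith : ∀ B C : ℝ, (xp - cn) * (1 - p) + (C + B) - B
          = C - (cn - xp) * (1 - p) := by intro B C; ring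
      rw [harith, hconst, ← integral_sub hIcc hIconst]
      rw [← integral_Ioc_eq_integral_Ioo]
      congr 1
      funext x
      ring
    have h0 : 0 ≤ gapFun p F G := by
      rw [EΓ]
      refine setIntegral_nonneg measurableSet_Ioo fun x hx => ?_
      have hnot : ¬ p ≤ G x := fun h =>
        absurd ((hGgal p le_rfl hp.2.le x).mpr h) (not_le.mpr hx.2)
      push_neg at hnot
      linarith
    have hGxp : G xp < p := by
      by_contra h
      push_neg at h
      exact absurd ((hGgal p le_rfl hp.2.le xp).mpr h) (not_le.mpr hcase)
    have h1 : gapFun p F G ≤ (cn - xp) * (p - G xp) := by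
      rw [EΓ]
      have hIGp : IntegrableOn (fun x => p - G x) (Ioo xp cn) volume := by
        have hfun2 : (fun x => p - G x) = fun x => (1 - G x) - (1 - p) := by funext x; ring
        rw [hfun2]
        exact (hIcc.mono_set Ioo_subset_Ioc_self).sub
          (hIconst.mono_set Ioo_subset_Ioc_self)
      have hIc2 : IntegrableOn (fun _ : ℝ => p - G xp) (Ioo xp cn) volume :=
        integrableOn_const (by rw [Real.volume_Ioo]; exact ENNReal.ofReal_ne_top)
      have hmono2 : ∫ x in Ioo xp cn, (p - G x) ≤ ∫ _x in Ioo xp cn, (p - G xp) :=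
        setIntegral_mono_on hIGp hIc2 measurableSet_Ioo
          (fun x hx => by have := hGmono hx.1.le; linarith)
      calc ∫ x in Ioo xp cn, (p - G x) ≤ ∫ _x in Ioo xp cn, (p - G xp) := hmono2
        _ = (cn - xp) * (p - G xp) := by
            rw [setIntegral_const, Real.volume_real_Ioo_of_le hcase.le,
              smul_eq_mul]
    rw [abs_of_nonneg h0, abs_sub_comm, abs_of_nonneg (by linarith : (0:ℝ) ≤ p - G xp)]
    calc gapFun p F G ≤ (cn - xp) * (p - G xp) := h1
      _ ≤ (M - m) * (p - G xp) := by
          apply mul_le_mul_of_nonneg_right (by linarith) (by linarith)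

end Det

section CdfFacts
variable (μ : Measure ℝ) [IsProbabilityMeasure μ]


lemma cdfOf_eq : cdfOf μ = ⇑(cdf μ) := funext fun x => (cdf_eq_real μ x).symm

lemma cdfOf_mono : Monotone (cdfOf μ) := by rw [cdfOf_eq]; exact monotone_cdf μ

lemma cdfOf_rc : ∀ x, ContinuousWithinAt (cdfOf μ) (Ici x) x := by
  rw [cdfOf_eq]; exact fun x => (cdf μ).right_continuous x

lemma cdfOf_le_one : ∀ x, cdfOf μ x ≤ 1 := by rw [cdfOf_eq]; exact cdf_le_one μ

lemma cdfOf_nonneg : ∀ x, 0 ≤ cdfOf μ x := by rw [cdfOf_eq]; exact cdf_nonneg μ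

lemma cdfOf_tendsto_atBot : Tendsto (cdfOf μ) atBot (𝓝 0) := by
  rw [cdfOf_eq]; exact tendsto_cdf_atBot μ

lemma cdfOf_tendsto_atTop : Tendsto (cdfOf μ) atTop (𝓝 1) := by
  rw [cdfOf_eq]; exact tendsto_cdf_atTop μ

lemma one_sub_cdfOf (x : ℝ) : 1 - cdfOf μ x = (μ (Ioi x)).toReal := by
  have h1 : μ (Iic x) + μ (Ioi x) = 1 := by
    rw [← compl_Iic (a := x), measure_add_measure_compl measurableSet_Iic, measure_univ]
  have h2 : (μ (Iic x)).toReal + (μ (Ioi x)).toReal = 1 := by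
    rw [← ENNReal.toReal_add (measure_ne_top μ _) (measure_ne_top μ _), h1, ENNReal.toReal_one]
  simp only [cdfOf]
  linarith

lemma tail_integrable (hμ : Integrable (fun x => max x 0) μ) (a : ℝ) :
    IntegrableOn (fun x => 1 - cdfOf μ x) (Ioi a) volume := by
  refine ⟨(measurable_const.sub (cdfOf_mono μ).measurable).aestronglyMeasurable, ?_⟩
  have heq : ∀ x : ℝ, (‖1 - cdfOf μ x‖₊ : ℝ≥0∞) = μ (Ioi x) := by
    intro x
    rw [← enorm_eq_nnnorm, Real.enorm_eq_ofReal (by linarith [cdfOf_le_one μ x]), one_sub_cdfOf,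
      ENNReal.ofReal_toReal (measure_ne_top μ _)]
  show ∫⁻ x, (‖1 - cdfOf μ x‖₊ : ℝ≥0∞) ∂(volume.restrict (Ioi a)) < ⊤
  simp_rw [heq]
  have h1 : ∀ x : ℝ, μ (Ioi x) = ∫⁻ y, (if x < y then (1:ℝ≥0∞) else 0) ∂μ := by
    intro x
    have : (fun y => if x < y then (1:ℝ≥0∞) else 0) = (Ioi x).indicator (fun _ => 1) := by
      ext y; simp [Set.indicator_apply, mem_Ioi]
    rw [this, lintegral_indicator measurableSet_Ioi, setLIntegral_one]
  simp_rw [h1]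
  have hmeasf : Measurable (fun z : ℝ × ℝ => if z.1 < z.2 then (1:ℝ≥0∞) else 0) := by
    refine Measurable.ite ?_ measurable_const measurable_const
    exact measurableSet_lt measurable_fst measurable_snd
  rw [lintegral_lintegral_swap hmeasf.aemeasurable]
  have h2 : ∀ y : ℝ, (∫⁻ x in Ioi a, (if x < y then (1:ℝ≥0∞) else 0))
      = ENNReal.ofReal (y - a) := by
    intro y
    have : (fun x => if x < y then (1:ℝ≥0∞) else 0) = (Iio y).indicator (fun _ => 1) := by
      ext x; simp [Set.indicator_apply, mem_Iio]
    rw [this, lintegral_indicator measurableSet_Iio, setLIntegral_one,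
      Measure.restrict_apply measurableSet_Iio, Iio_inter_Ioi, Real.volume_Ioo]
  simp_rw [h2]
  calc ∫⁻ y, ENNReal.ofReal (y - a) ∂μ
      ≤ ∫⁻ y, (ENNReal.ofReal (max y 0) + ENNReal.ofReal |a|) ∂μ := by
        refine lintegral_mono fun y => ?_
        rw [← ENNReal.ofReal_add (le_max_right y 0) (abs_nonneg a)]
        exact ENNReal.ofReal_le_ofReal (by linarith [le_max_left y 0, neg_le_abs a])
    _ = (∫⁻ y, ENNReal.ofReal (max y 0) ∂μ) + ENNReal.ofReal |a| := by
        rw [lintegral_add_right _ measurable_const, lintegral_const, measure_univ, mul_one]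
    _ < ⊤ := by
        refine ENNReal.add_lt_top.mpr ⟨?_, ENNReal.ofReal_lt_top⟩
        have h3 := hμ.2
        rw [HasFiniteIntegral] at h3
        refine lt_of_le_of_lt (lintegral_mono fun y => ?_) h3
        rw [Real.enorm_eq_ofReal (le_max_right y 0)]

end CdfFacts

section Emp
variable {Ω : Type*} {X : ℕ → Ω → ℝ} {n : ℕ} {ω : Ω}

lemma empCdf_mono : Monotone (empCdf X n ω) := by
  intro s t hst
  rcases Nat.eq_zero_or_pos n with h | h
  · simp [empCdf, h]
  · rw [empCdf, empCdf, div_le_div_iff_of_pos_right (by exact_mod_cast h : (0:ℝ) < n)]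
    refine Finset.sum_le_sum fun i _ => ?_
    split_ifs with h1 h2
    · exact le_rfl
    · exact absurd (h1.trans hst) h2
    · norm_num
    · exact le_rfl

lemma empCdf_nonneg (t : ℝ) : 0 ≤ empCdf X n ω t := by
  apply div_nonneg _ (Nat.cast_nonneg n)
  exact Finset.sum_nonneg fun i _ => by positivity

lemma empCdf_le_one (t : ℝ) : empCdf X n ω t ≤ 1 := by
  rcases Nat.eq_zero_or_pos n with h | h
  · simp [empCdf, h]
  · rw [empCdf, div_le_one (by exact_mod_cast h)]
    calc (∑ i ∈ Finset.range n, if X i ω ≤ t then (1:ℝ) else 0)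
        ≤ ∑ _i ∈ Finset.range n, (1:ℝ) :=
          Finset.sum_le_sum fun i _ => by split <;> norm_num
      _ = n := by simp

lemma empCdf_eventually_one (hn : 0 < n) : ∃ b, ∀ x, b ≤ x → empCdf X n ω x = 1 := by
  have hne : (Finset.range n).Nonempty := Finset.nonempty_range_iff.mpr hn.ne'
  refine ⟨(Finset.range n).sup' hne (fun i => X i ω), fun x hx => ?_⟩
  have hall : ∀ i ∈ Finset.range n, X i ω ≤ x := fun i hi =>
    le_trans (Finset.le_sup' (fun i => X i ω) hi) hx
  rw [empCdf, Finset.sum_congr rfl (fun i hi => if_pos (hall i hi)), Finset.sum_const,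
    Finset.card_range, nsmul_eq_mul, mul_one, div_self (by exact_mod_cast hn.ne')]

lemma empCdf_rc (t : ℝ) : ContinuousWithinAt (empCdf X n ω) (Ici t) t := by
  -- locally constant to the right
  obtain ⟨ε, hε, hconst⟩ : ∃ ε > 0, ∀ y ∈ Ico t (t + ε), empCdf X n ω y = empCdf X n ω t := by
    set s := (Finset.range n).filter (fun i => t < X i ω) with hs
    by_cases hne : s.Nonempty
    · refine ⟨s.inf' hne (fun i => X i ω - t), ?_, ?_⟩
      · rw [gt_iff_lt, Finset.lt_inf'_iff]
        intro i hi
        rw [hs, Finset.mem_filter] at hi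
        linarith [hi.2]
      · intro y hy
        rw [empCdf, empCdf]
        congr 1
        refine Finset.sum_congr rfl fun i hi => ?_
        rcases le_or_gt (X i ω) t with h | h
        · rw [if_pos (h.trans hy.1), if_pos h]
        · have his : i ∈ s := by rw [hs, Finset.mem_filter]; exact ⟨hi, h⟩
          have : X i ω - t ≥ s.inf' hne (fun i => X i ω - t) := Finset.inf'_le _ his
          rw [if_neg (by linarith [hy.2]), if_neg (not_le.mpr h)]
    · refine ⟨1, one_pos, fun y hy => ?_⟩
      rw [empCdf, empCdf]
      congr 1
      refine Finset.sum_congr rfl fun i hi => ?_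
      rcases le_or_gt (X i ω) t with h | h
      · rw [if_pos (h.trans hy.1), if_pos h]
      · exact absurd ⟨hi, h⟩ (fun hmem => hne ⟨i, Finset.mem_filter.mpr hmem⟩)
  have hmem : Ico t (t + ε) ∈ 𝓝[Ici t] t := by
    rw [mem_nhdsWithin]
    exact ⟨Iio (t + ε), isOpen_Iio, mem_Iio.mpr (by linarith), fun y hy => ⟨hy.2, hy.1⟩⟩
  have hev : (empCdf X n ω) =ᶠ[𝓝[Ici t] t] (fun _ => empCdf X n ω t) := by
    filter_upwards [hmem] with y hy using hconst y hy
  exact ContinuousWithinAt.congr_of_eventuallyEq continuousWithinAt_const hev rfl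

lemma empCdf_meas [MeasurableSpace Ω] (ht : ∀ i, Measurable (X i)) (t : ℝ) :
    Measurable (fun ω => empCdf X n ω t) := by
  simp only [empCdf]
  refine Measurable.div_const ?_ _
  refine Finset.measurable_sum _ fun i _ => ?_
  exact Measurable.ite (measurableSet_le (ht i) measurable_const)
    measurable_const measurable_const

end Emp

lemma emp_tendsto {Ω : Type*} [MeasurableSpace Ω] (P : Measure Ω) [IsProbabilityMeasure P]
    (μ : Measure ℝ) [IsProbabilityMeasure μ] (X : ℕ → Ω → ℝ) (hmeas : ∀ i, Measurable (X i))
    (hindep : iIndepFun X P) (hdist : ∀ i, Measure.map (X i) P = μ)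
    (t : ℝ) :
    ∀ᵐ ω ∂P, Tendsto (fun n => empCdf X n ω t) atTop (𝓝 (cdfOf μ t)) := by
  set f : ℝ → ℝ := fun x => if x ≤ t then 1 else 0 with hf
  have hfmeas : Measurable f :=
    Measurable.ite measurableSet_Iic measurable_const measurable_const
  set Y : ℕ → Ω → ℝ := fun i ω => f (X i ω) with hY
  have hYmeas : ∀ i, Measurable (Y i) := fun i => hfmeas.comp (hmeas i)
  have hint : Integrable (Y 0) P := by
    refine Integrable.mono' (integrable_const 1) (hYmeas 0).aestronglyMeasurable ?_
    refine ae_of_all _ fun ω => ?_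
    simp only [hY, hf, Real.norm_eq_abs]
    split_ifs <;> simp
  have hpair : Pairwise (Function.onFun (IndepFun · · P) Y) := fun i j hij =>
    (hindep.indepFun hij).comp hfmeas hfmeas
  have hident : ∀ i, IdentDistrib (Y i) (Y 0) P P := fun i =>
    IdentDistrib.comp ⟨(hmeas i).aemeasurable, (hmeas 0).aemeasurable,
      by rw [hdist i, hdist 0]⟩ hfmeas
  have hmain := strong_law_ae_real Y hint hpair hident
  have hEY : P[Y 0] = cdfOf μ t := by
    have h1 : (fun ω => Y 0 ω) = (X 0 ⁻¹' (Iic t)).indicator (fun _ => (1:ℝ)) := by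
      funext ω
      by_cases h : X 0 ω ≤ t
      · rw [Set.indicator_of_mem (by simpa [mem_preimage, mem_Iic] using h)]
        simp [hY, hf, h]
      · rw [Set.indicator_of_notMem (by simpa [mem_preimage, mem_Iic] using h)]
        simp [hY, hf, h]
    show ∫ ω, Y 0 ω ∂P = cdfOf μ t
    rw [h1, integral_indicator_const _ ((hmeas 0) measurableSet_Iic), smul_eq_mul, mul_one]
    have h2 : P (X 0 ⁻¹' (Iic t)) = μ (Iic t) := by
      rw [← hdist 0, Measure.map_apply (hmeas 0) measurableSet_Iic]
    rw [measureReal_def, h2]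
    rfl
  rw [hEY] at hmain
  filter_upwards [hmain] with ω hω
  exact hω

/-- for `p ∈ (0,1)`, a cdf `F ∈ F₁⁺` continuous at `x_p := F⁻¹(p)`,
and the empirical cdf `F_n` of independent random variables `X_1, …, X_n`, each with
cdf `F`, the gap `Γ_p(F, F_n)` converges to `0` in probability as `n → ∞`. -/
theorem stmt13 {Ω : Type*} [MeasurableSpace Ω] (P : Measure Ω) [IsProbabilityMeasure P]
    (μ : Measure ℝ) [IsProbabilityMeasure μ]
    (hμ : Integrable (fun x => max x 0) μ)
    (p : ℝ) (hp : p ∈ Ioo (0 : ℝ) 1)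
    (hcont : ContinuousAt (cdfOf μ) (qtl (cdfOf μ) p))
    (X : ℕ → Ω → ℝ) (hmeas : ∀ i, Measurable (X i))
    (hindep : iIndepFun X P)
    (hdist : ∀ i, Measure.map (X i) P = μ) :
    TendstoInMeasure P (fun n ω => gapFun p (cdfOf μ) (empCdf X n ω)) atTop
      (fun _ => (0 : ℝ)) := by
  classical
  set F : ℝ → ℝ := cdfOf μ with hFdef
  have hFmono : Monotone F := cdfOf_mono μ
  have hFrc : ∀ x, ContinuousWithinAt F (Ici x) x := cdfOf_rc μ
  have hF0 : Tendsto F atBot (𝓝 0) := cdfOf_tendsto_atBot μ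
  have hF1t : Tendsto F atTop (𝓝 1) := cdfOf_tendsto_atTop μ
  have hFle1 : ∀ x, F x ≤ 1 := cdfOf_le_one μ
  set xp := qtl F p with hxp
  have hFgalp : ∀ x, (xp ≤ x ↔ p ≤ F x) := by
    have hne : {x | p ≤ F x}.Nonempty := by
      obtain ⟨x, hx⟩ := (hF1t.eventually (eventually_gt_nhds hp.2)).exists
      exact ⟨x, hx.le⟩
    have hbd : BddBelow {x | p ≤ F x} := by
      obtain ⟨x₀, hx₀⟩ := (hF0.eventually (eventually_lt_nhds hp.1)).exists
      refine ⟨x₀, fun y hy => ?_⟩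
      by_contra h
      push_neg at h
      exact absurd (le_trans hy (hFmono h.le)) (not_le.mpr hx₀)
    exact fun x => qtl_le_iff hFmono hne hbd (isClosed_level hFmono hFrc p)
  have hFxp : F xp = p := by
    refine le_antisymm ?_ ((hFgalp xp).mp le_rfl)
    have hev : ∀ x ∈ Iio xp, F x ≤ p := by
      intro x hx
      by_contra h
      push_neg at h
      exact absurd ((hFgalp x).mpr h.le) (not_le.mpr hx)
    have hten : Tendsto F (𝓝[<] xp) (𝓝 (F xp)) :=
      hcont.continuousWithinAt.tendsto
    exact le_of_tendsto hten (eventually_nhdsWithin_of_forall hev)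
  set m := xp - 1 with hm
  have hFm : F m < p := by
    by_contra h
    push_neg at h
    have := (hFgalp m).mpr h
    rw [hm] at this
    linarith
  obtain ⟨M₀, hM₀⟩ := (hF1t.eventually (eventually_gt_nhds hp.2)).exists
  set M := max M₀ xp with hM
  have hMxp : xp ≤ M := le_max_right _ _
  have hFM : p < F M := lt_of_lt_of_le hM₀ (hFmono (le_max_left _ _))
  have hKpos : (0:ℝ) < M - m := by rw [hm]; linarith
  have ha1 := emp_tendsto P μ X hmeas hindep hdist m
  have ha2 := emp_tendsto P μ X hmeas hindep hdist M
  have ha3 := emp_tendsto P μ X hmeas hindep hdist xp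
  set φ : ℕ → Ω → ℝ := fun n ω =>
    |empCdf X n ω m - F m| + |empCdf X n ω M - F M| + |empCdf X n ω xp - F xp| with hφ
  have hφmeas : ∀ n : ℕ, AEStronglyMeasurable (φ n) P := by
    intro n
    apply Measurable.aestronglyMeasurable
    exact (((empCdf_meas hmeas m).sub measurable_const).abs.add
      ((empCdf_meas hmeas M).sub measurable_const).abs).add
      ((empCdf_meas hmeas xp).sub measurable_const).abs
  have hφae : ∀ᵐ ω ∂P, Tendsto (fun n => φ n ω) atTop (𝓝 0) := by
    filter_upwards [ha1, ha2, ha3] with ω h1 h2 h3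
    have l1 : Tendsto (fun n => |empCdf X n ω m - F m|) atTop (𝓝 0) := by
      have := (h1.sub (tendsto_const_nhds (x := F m))).abs
      simpa [hFdef] using this
    have l2 : Tendsto (fun n => |empCdf X n ω M - F M|) atTop (𝓝 0) := by
      have := (h2.sub (tendsto_const_nhds (x := F M))).abs
      simpa [hFdef] using this
    have l3 : Tendsto (fun n => |empCdf X n ω xp - F xp|) atTop (𝓝 0) := by
      have := (h3.sub (tendsto_const_nhds (x := F xp))).abs
      simpa [hFdef] using this
    have := (l1.add l2).add l3
    simpa using this
  have hφT : TendstoInMeasure P φ atTop (fun _ => 0) :=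
    tendstoInMeasure_of_tendsto_ae hφmeas hφae
  rw [tendstoInMeasure_iff_dist]
  intro ε hε
  set δ := min (min (p - F m) (F M - p)) (ε / (M - m)) with hδdef
  have hδpos : 0 < δ :=
    lt_min (lt_min (by linarith) (by linarith)) (div_pos hε hKpos)
  have key := (tendstoInMeasure_iff_dist.mp hφT) δ hδpos
  refine tendsto_of_tendsto_of_tendsto_of_le_of_le tendsto_const_nhds key
    (fun n => zero_le) (fun n => measure_mono ?_)
  intro ω hω
  simp only [mem_setOf_eq] at hω ⊢
  by_contra hcon
  push_neg at hcon
  rw [Real.dist_eq, sub_zero] at hcon hω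
  have hφval : |empCdf X n ω m - F m| + |empCdf X n ω M - F M|
      + |empCdf X n ω xp - F xp| < δ := by
    have h0 : |φ n ω| < δ := hcon
    rwa [abs_of_nonneg (by positivity)] at h0
  have hc0 := abs_nonneg (empCdf X n ω m - F m)
  have hc1 := abs_nonneg (empCdf X n ω M - F M)
  have hc2 := abs_nonneg (empCdf X n ω xp - F xp)
  have hδ1 : δ ≤ p - F m := le_trans (min_le_left _ _) (min_le_left _ _)
  have hδ2 : δ ≤ F M - p := le_trans (min_le_left _ _) (min_le_right _ _)
  have hδ3 : δ ≤ ε / (M - m) := min_le_right _ _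
  have hb1 : empCdf X n ω m < p := by
    have := (abs_lt.mp (by linarith : |empCdf X n ω m - F m| < p - F m)).2
    linarith
  have hb2 : p < empCdf X n ω M := by
    have := (abs_lt.mp (by linarith : |empCdf X n ω M - F M| < F M - p)).1
    linarith
  have d3 : |empCdf X n ω xp - F xp| < ε / (M - m) := by linarith
  have hn : 0 < n := by
    by_contra h
    push_neg at h
    have hn0 : n = 0 := Nat.le_zero.mp h
    rw [hn0] at hb2
    simp [empCdf] at hb2
    linarith [hp.1]
  have hdet := det_bound (F := F) (G := empCdf X n ω) hp hFmono hFrc hF0 hF1t hFle1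
    (tail_integrable μ hμ xp) empCdf_mono empCdf_rc empCdf_nonneg empCdf_le_one
    hb1 hb2.le (by rw [hm]; linarith) hMxp (empCdf_eventually_one hn)
  have hfin : |gapFun p F (empCdf X n ω)| < ε := by
    calc |gapFun p F (empCdf X n ω)| ≤ (M - m) * |empCdf X n ω xp - p| := hdet
      _ < (M - m) * (ε / (M - m)) := by
          apply mul_lt_mul_of_pos_left _ hKpos
          rw [← hFxp]
          exact d3
      _ = ε := by field_simp
  linarith
end

section
/- Let p ∈ (0,1), let F ∈ F_1^+ be a cdf continuous at x_p := F^{-1}(p), and let F_n be the empirical cdf of independent random variables X_1, …, X_n, each with cdf F. Then ∫_p^1 F_n^{-1}(u) du converges in probability to ∫_p^1 F^{-1}(u) du as n → ∞. -/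
open MeasureTheory ProbabilityTheory Filter Set

/-!
By the strong law of large numbers, almost surely `F_n(r) → F(r)` at every rational `r` and
`∫ (x - c)⁺ dF_n → ∫ (x - c)⁺ dF`, where `c = F⁻¹(p)`. Fix such an outcome. Then
`F_n⁻¹(u) → F⁻¹(u)` at every continuity point `u` of the monotone function `F⁻¹`, hence for
almost every `u ∈ (0,1)`. As `F⁻¹` pushes the uniform law on `(0,1)` forward to `F`, the
integrals of `(F_n⁻¹ - c)⁺` over `(0,1)` converge, and Scheffé's lemma upgrades this to `L¹`
convergence, so their integrals over `(p,1)` converge as well. On `(p,1)` the remaining part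
`(c - F_n⁻¹)⁺` is at most `(c - F_n⁻¹(p))⁺`, which tends to `0` since
`liminf F_n⁻¹(p) ≥ F⁻¹(p)`. Almost sure convergence implies convergence in probability.
-/

open scoped Topology ENNReal

section Quantile

variable {ν : Measure ℝ} [IsProbabilityMeasure ν] {u x : ℝ}

lemma cdfOf_eq_cdf (ν : Measure ℝ) [IsProbabilityMeasure ν] : cdfOf ν = cdf ν :=
  funext fun x => (cdf_eq_real ν x).symm

lemma monotone_cdfOf : Monotone (cdfOf ν) := by
  rw [cdfOf_eq_cdf]; exact monotone_cdf ν

lemma bddBelow_setOf_le_cdfOf (hu : 0 < u) : BddBelow {x | u ≤ cdfOf ν x} := by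
  rw [cdfOf_eq_cdf]
  obtain ⟨x₀, hx₀⟩ := eventually_atBot.1 ((tendsto_cdf_atBot ν).eventually_lt_const hu)
  exact ⟨x₀, fun x hx => le_of_not_gt fun h => (hx₀ x h.le).not_ge hx⟩

lemma nonempty_setOf_le_cdfOf (hu : u < 1) : {x | u ≤ cdfOf ν x}.Nonempty := by
  rw [cdfOf_eq_cdf]
  obtain ⟨x₀, hx₀⟩ := ((tendsto_cdf_atTop ν).eventually_const_lt hu).exists
  exact ⟨x₀, hx₀.le⟩

/-- Right-continuity of the cdf makes the infimum defining `qtl` attained. -/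
lemma qtl_le_iff_s14 (hu : u ∈ Ioo 0 1) : qtl (cdfOf ν) u ≤ x ↔ u ≤ cdfOf ν x := by
  refine ⟨fun h => ?_, fun h => csInf_le (bddBelow_setOf_le_cdfOf hu.1) h⟩
  have hright : ∀ y, qtl (cdfOf ν) u < y → u ≤ cdfOf ν y := fun y hy => by
    obtain ⟨s, hs, hsy⟩ := exists_lt_of_csInf_lt (nonempty_setOf_le_cdfOf hu.2) hy
    exact hs.trans (monotone_cdfOf hsy.le)
  have hcont : ContinuousWithinAt (cdfOf ν) (Ioi (qtl (cdfOf ν) u)) (qtl (cdfOf ν) u) := by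
    rw [cdfOf_eq_cdf]; exact ((cdf ν).right_continuous _).mono Ioi_subset_Ici_self
  exact (ge_of_tendsto hcont (eventually_nhdsWithin_of_forall hright)).trans (monotone_cdfOf h)

lemma lt_qtl_iff (hu : u ∈ Ioo 0 1) : x < qtl (cdfOf ν) u ↔ cdfOf ν x < u := by
  simpa only [not_le] using (qtl_le_iff_s14 hu).not

lemma monotoneOn_qtl : MonotoneOn (qtl (cdfOf ν)) (Ioo 0 1) := fun _ hu _ hv huv =>
  (qtl_le_iff_s14 hu).2 (huv.trans ((qtl_le_iff_s14 hv).1 le_rfl))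

end Quantile

section QuantileTransform

variable {ν : Measure ℝ} [IsProbabilityMeasure ν]

-- `qtl` is a junk `sInf` outside `(0,1)`; cut off there, it has explicit sublevel sets and is
-- therefore measurable.
lemma indicator_qtl_le_iff {u t : ℝ} :
    (Ioo 0 1).indicator (qtl (cdfOf ν)) u ≤ t ↔
      (u ∈ Ioo 0 1 ∧ u ≤ cdfOf ν t) ∨ (u ∉ Ioo 0 1 ∧ 0 ≤ t) := by
  by_cases hu : u ∈ Ioo 0 1
  · simp [hu, qtl_le_iff_s14 hu]
  · simp [hu]

lemma measurable_indicator_qtl_uncurry {Ω : Type*} [MeasurableSpace Ω] {ν : Ω → Measure ℝ}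
    [∀ ω, IsProbabilityMeasure (ν ω)] (hν : ∀ t, Measurable fun ω => cdfOf (ν ω) t) :
    Measurable fun z : Ω × ℝ => (Ioo 0 1).indicator (qtl (cdfOf (ν z.1))) z.2 := by
  refine measurable_of_Iic fun t => ?_
  simp only [preimage, mem_Iic, indicator_qtl_le_iff]
  have hIoo : MeasurableSet {z : Ω × ℝ | z.2 ∈ Ioo 0 1} := measurable_snd measurableSet_Ioo
  exact (hIoo.inter (measurableSet_le measurable_snd ((hν t).comp measurable_fst))).union
    (hIoo.compl.inter (MeasurableSet.const _))

lemma measurable_indicator_qtl : Measurable ((Ioo 0 1).indicator (qtl (cdfOf ν))) :=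
  (measurable_indicator_qtl_uncurry (Ω := Unit) fun _ => measurable_const).comp
    (measurable_prodMk_left (x := ()))

lemma aemeasurable_qtl : AEMeasurable (qtl (cdfOf ν)) (volume.restrict (Ioo 0 1)) :=
  measurable_indicator_qtl.aemeasurable.congr (indicator_ae_eq_restrict measurableSet_Ioo)

lemma volume_Ioo_inter_Iic {a : ℝ} (ha : a ≤ 1) :
    volume (Ioo 0 1 ∩ Iic a) = ENNReal.ofReal a := by
  rw [← measure_congr ((ae_eq_refl (Ioo (0 : ℝ) 1)).inter Iio_ae_eq_Iic), Ioo_inter_Iio,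
    min_eq_right ha, Real.volume_Ioo, sub_zero]

lemma map_qtl : (volume.restrict (Ioo 0 1)).map (qtl (cdfOf ν)) = ν := by
  have hm := measurable_indicator_qtl (ν := ν)
  rw [← Measure.map_congr (indicator_ae_eq_restrict measurableSet_Ioo)]
  have : IsProbabilityMeasure (volume.restrict (Ioo (0 : ℝ) 1)) := ⟨by simp⟩
  have := Measure.isProbabilityMeasure_map (μ := volume.restrict (Ioo (0 : ℝ) 1)) hm.aemeasurable
  refine Measure.ext_of_Iic _ _ fun t => ?_
  have hpre : (Ioo 0 1).indicator (qtl (cdfOf ν)) ⁻¹' Iic t ∩ Ioo 0 1 =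
      Ioo 0 1 ∩ Iic (cdfOf ν t) := by
    ext u; simp only [mem_inter_iff, mem_preimage, mem_Iic, indicator_qtl_le_iff]; tauto
  rw [Measure.map_apply hm measurableSet_Iic, Measure.restrict_apply (hm measurableSet_Iic),
    hpre, cdfOf_eq_cdf, ofReal_cdf .. |>.symm]
  exact volume_Ioo_inter_Iic (cdf_le_one ν t)

lemma integral_comp_qtl {f : ℝ → ℝ} (hf : Measurable f) :
    ∫ u in Ioo 0 1, f (qtl (cdfOf ν) u) = ∫ x, f x ∂ν := by
  conv_rhs => rw [← map_qtl (ν := ν)]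
  exact (integral_map aemeasurable_qtl hf.aestronglyMeasurable).symm

lemma integrableOn_comp_qtl {f : ℝ → ℝ} (hf : Measurable f) (hfi : Integrable f ν) :
    IntegrableOn (fun u => f (qtl (cdfOf ν) u)) (Ioo 0 1) := by
  rw [← map_qtl (ν := ν)] at hfi
  exact (integrable_map_measure hf.aestronglyMeasurable aemeasurable_qtl).1 hfi

end QuantileTransform

lemma stronglyMeasurable_intervalIntegral_qtl {Ω : Type*} [MeasurableSpace Ω]
    {ν : Ω → Measure ℝ} [∀ ω, IsProbabilityMeasure (ν ω)]
    (hν : ∀ t, Measurable fun ω => cdfOf (ν ω) t) {p : ℝ} (hp₀ : 0 ≤ p) (hp₁ : p ≤ 1) :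
    StronglyMeasurable fun ω => ∫ u in p..1, qtl (cdfOf (ν ω)) u := by
  have hind : (fun ω => ∫ u in p..1, qtl (cdfOf (ν ω)) u) =
      fun ω => ∫ u in Ioo p 1, (Ioo 0 1).indicator (qtl (cdfOf (ν ω))) u := by
    funext ω
    rw [intervalIntegral.integral_of_le hp₁, integral_Ioc_eq_integral_Ioo]
    exact setIntegral_congr_fun measurableSet_Ioo fun u hu =>
      (indicator_of_mem (Ioo_subset_Ioo_left hp₀ hu) _).symm
  rw [hind]
  exact (measurable_indicator_qtl_uncurry hν).stronglyMeasurable.integral_prod_right'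

/-- Scheffé's lemma. -/
theorem tendsto_lintegral_enorm_sub_of_tendsto_integral {α : Type*} [MeasurableSpace α]
    {μ : Measure α} {F : ℕ → α → ℝ} {f : α → ℝ} (hF_nonneg : ∀ n, 0 ≤ᵐ[μ] F n)
    (hFi : ∀ n, Integrable (F n) μ) (hfi : Integrable f μ)
    (hlim : ∀ᵐ x ∂μ, Tendsto (fun n => F n x) atTop (𝓝 (f x)))
    (hint : Tendsto (fun n => ∫ x, F n x ∂μ) atTop (𝓝 (∫ x, f x ∂μ))) :
    Tendsto (fun n => ∫⁻ x, ‖F n x - f x‖ₑ ∂μ) atTop (𝓝 0) := by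
  have hdefect_int : ∀ n, Integrable (fun x => max (f x - F n x) 0) μ := fun n =>
    (hfi.sub (hFi n)).pos_part
  have hdefect : Tendsto (fun n => ∫ x, max (f x - F n x) 0 ∂μ) atTop (𝓝 0) := by
    have hbound : ∀ n, ∀ᵐ x ∂μ, ‖max (f x - F n x) 0‖ ≤ |f x| := fun n => by
      filter_upwards [hF_nonneg n] with x (hx : 0 ≤ F n x)
      rw [Real.norm_of_nonneg (le_max_right _ _)]
      exact max_le (by linarith [le_abs_self (f x), hx]) (abs_nonneg _)
    have hdom := tendsto_integral_of_dominated_convergence _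
      (fun n => (hdefect_int n).aestronglyMeasurable) hfi.abs hbound
      (by filter_upwards [hlim] with x hx using (tendsto_const_nhds.sub hx).max tendsto_const_nhds)
    simpa using hdom
  have habs : ∀ n, ∫ x, ‖F n x - f x‖ ∂μ =
      (∫ x, F n x ∂μ - ∫ x, f x ∂μ) + 2 * ∫ x, max (f x - F n x) 0 ∂μ := fun n => by
    have hpt : ∀ a b : ℝ, ‖a - b‖ = (a - b) + 2 * max (b - a) 0 := fun a b => by
      rw [Real.norm_eq_abs]
      rcases le_total a b with h | h
      · rw [abs_of_nonpos (by linarith), max_eq_left (by linarith)]; ring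
      · rw [abs_of_nonneg (by linarith), max_eq_right (by linarith)]; ring
    simp_rw [hpt]
    rw [integral_add (f := fun x => F n x - f x) ((hFi n).sub hfi)
      ((hdefect_int n).const_mul 2),
      integral_sub (hFi n) hfi, integral_const_mul]
  have hL1 : Tendsto (fun n => ∫ x, ‖F n x - f x‖ ∂μ) atTop (𝓝 0) := by
    rw [tendsto_congr habs]
    simpa using (hint.sub_const (∫ x, f x ∂μ)).add (hdefect.const_mul 2)
  have := ENNReal.tendsto_ofReal hL1
  rw [ENNReal.ofReal_zero] at this
  exact this.congr fun n => ofReal_integral_norm_eq_lintegral_enorm ((hFi n).sub hfi)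

section QuantileConvergence

variable {μ : Measure ℝ} [IsProbabilityMeasure μ] {ν : ℕ → Measure ℝ}
  [∀ n, IsProbabilityMeasure (ν n)] {u p : ℝ}

lemma eventually_lt_qtl
    (hconv : ∀ r : ℚ, Tendsto (fun n => cdfOf (ν n) r) atTop (𝓝 (cdfOf μ r)))
    (hu : u ∈ Ioo 0 1) {b : ℝ} (hb : b < qtl (cdfOf μ) u) :
    ∀ᶠ n in atTop, b < qtl (cdfOf (ν n)) u := by
  obtain ⟨r, hbr, hr⟩ := exists_rat_btwn hb
  filter_upwards [(hconv r).eventually_lt_const ((lt_qtl_iff hu).1 hr)] with n hn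
  exact hbr.trans ((lt_qtl_iff hu).2 hn)

lemma eventually_qtl_lt
    (hconv : ∀ r : ℚ, Tendsto (fun n => cdfOf (ν n) r) atTop (𝓝 (cdfOf μ r)))
    (hu : u ∈ Ioo 0 1) (hcont : ContinuousWithinAt (qtl (cdfOf μ)) (Ioi u) u) {b : ℝ}
    (hb : qtl (cdfOf μ) u < b) :
    ∀ᶠ n in atTop, qtl (cdfOf (ν n)) u < b := by
  obtain ⟨v, hvb, huv, hv1⟩ :=
    ((hcont.eventually (gt_mem_nhds hb)).and (Ioo_mem_nhdsGT hu.2)).exists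
  have hv : v ∈ Ioo 0 1 := ⟨hu.1.trans huv, hv1⟩
  obtain ⟨r, hvr, hrb⟩ := exists_rat_btwn hvb
  have hur : u < cdfOf μ r := huv.trans_le ((qtl_le_iff_s14 hv).1 hvr.le)
  filter_upwards [(hconv r).eventually_const_lt hur] with n hn
  exact ((qtl_le_iff_s14 hu).2 hn.le).trans_lt hrb

lemma tendsto_qtl_of_continuousWithinAt
    (hconv : ∀ r : ℚ, Tendsto (fun n => cdfOf (ν n) r) atTop (𝓝 (cdfOf μ r)))
    (hu : u ∈ Ioo 0 1) (hcont : ContinuousWithinAt (qtl (cdfOf μ)) (Ioi u) u) :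
    Tendsto (fun n => qtl (cdfOf (ν n)) u) atTop (𝓝 (qtl (cdfOf μ) u)) :=
  tendsto_order.2 ⟨fun _ hb => eventually_lt_qtl (ν := ν) hconv hu hb,
    fun _ hb => eventually_qtl_lt (ν := ν) hconv hu hcont hb⟩

lemma ae_continuousAt_qtl :
    ∀ᵐ u ∂(volume.restrict (Ioo 0 1)), ContinuousAt (qtl (cdfOf μ)) u := by
  have hbad := (monotoneOn_qtl (ν := μ)).countable_not_continuousWithinAt.ae_notMem volume
  filter_upwards [ae_restrict_mem measurableSet_Ioo, ae_restrict_of_ae hbad] with u hu hgood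
  rw [← continuousWithinAt_iff_continuousAt (isOpen_Ioo.mem_nhds hu)]
  by_contra h
  exact hgood ⟨hu, h⟩

lemma ae_tendsto_qtl
    (hconv : ∀ r : ℚ, Tendsto (fun n => cdfOf (ν n) r) atTop (𝓝 (cdfOf μ r))) :
    ∀ᵐ u ∂(volume.restrict (Ioo 0 1)),
      Tendsto (fun n => qtl (cdfOf (ν n)) u) atTop (𝓝 (qtl (cdfOf μ) u)) := by
  filter_upwards [ae_restrict_mem measurableSet_Ioo, ae_continuousAt_qtl (μ := μ)] with u hu hcont
  exact tendsto_qtl_of_continuousWithinAt hconv hu hcont.continuousWithinAt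

end QuantileConvergence

section UpperTail

variable {ν : Measure ℝ} [IsProbabilityMeasure ν] {p c : ℝ}

lemma norm_max_sub_qtl_le (hp : p ∈ Ioo 0 1) {u : ℝ} (hu : u ∈ Ioo p 1) :
    ‖max (c - qtl (cdfOf ν) u) 0‖ ≤ max (c - qtl (cdfOf ν) p) 0 := by
  have hpu : qtl (cdfOf ν) p ≤ qtl (cdfOf ν) u :=
    monotoneOn_qtl hp ⟨hp.1.trans hu.1, hu.2⟩ hu.1.le
  rw [Real.norm_of_nonneg (le_max_right _ _)]
  exact max_le_max (by linarith) le_rfl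

lemma integrableOn_max_sub_qtl (hp : p ∈ Ioo 0 1) :
    IntegrableOn (fun u => max (c - qtl (cdfOf ν) u) 0) (Ioo p 1) := by
  have hmeas : AEMeasurable (qtl (cdfOf ν)) (volume.restrict (Ioo p 1)) :=
    aemeasurable_qtl.mono_measure (Measure.restrict_mono (Ioo_subset_Ioo_left hp.1.le) le_rfl)
  refine Integrable.of_bound
    ((aemeasurable_const.sub hmeas).max aemeasurable_const).aestronglyMeasurable
    (max (c - qtl (cdfOf ν) p) 0) ?_
  filter_upwards [ae_restrict_mem measurableSet_Ioo] with u hu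
  exact norm_max_sub_qtl_le hp hu

lemma intervalIntegral_qtl_eq (hp : p ∈ Ioo 0 1)
    (hi : Integrable (fun x => max (x - c) 0) ν) :
    ∫ u in p..1, qtl (cdfOf ν) u = (1 - p) * c + (∫ u in Ioo p 1, max (qtl (cdfOf ν) u - c) 0) -
      ∫ u in Ioo p 1, max (c - qtl (cdfOf ν) u) 0 := by
  have hpos : IntegrableOn (fun u => max (qtl (cdfOf ν) u - c) 0) (Ioo p 1) :=
    (integrableOn_comp_qtl (by fun_prop) hi).mono_set (Ioo_subset_Ioo_left hp.1.le)
  have hneg := integrableOn_max_sub_qtl (ν := ν) (c := c) hp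
  have hsplit : ∀ x : ℝ, x = c + (max (x - c) 0 - max (c - x) 0) := fun x => by
    rw [← neg_sub x c, max_zero_sub_max_neg_zero_eq_self]; ring
  rw [intervalIntegral.integral_of_le hp.2.le, integral_Ioc_eq_integral_Ioo]
  conv_lhs => rw [integral_congr_ae (Eventually.of_forall fun u => hsplit (qtl (cdfOf ν) u))]
  have hdiff : IntegrableOn
      (fun u => max (qtl (cdfOf ν) u - c) 0 - max (c - qtl (cdfOf ν) u) 0) (Ioo p 1) :=
    hpos.sub hneg
  rw [integral_add (integrable_const c) hdiff, integral_sub hpos hneg,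
    setIntegral_const, Real.volume_real_Ioo_of_le hp.2.le, smul_eq_mul]
  ring

end UpperTail

theorem tendsto_intervalIntegral_qtl {μ : Measure ℝ} [IsProbabilityMeasure μ]
    {ν : ℕ → Measure ℝ} [∀ n, IsProbabilityMeasure (ν n)] {p : ℝ} (hp : p ∈ Ioo 0 1)
    (hconv : ∀ r : ℚ, Tendsto (fun n => cdfOf (ν n) r) atTop (𝓝 (cdfOf μ r)))
    (hμi : Integrable (fun x => max (x - qtl (cdfOf μ) p) 0) μ)
    (hνi : ∀ n, Integrable (fun x => max (x - qtl (cdfOf μ) p) 0) (ν n))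
    (hpos : Tendsto (fun n => ∫ x, max (x - qtl (cdfOf μ) p) 0 ∂ν n) atTop
      (𝓝 (∫ x, max (x - qtl (cdfOf μ) p) 0 ∂μ))) :
    Tendsto (fun n => ∫ u in p..1, qtl (cdfOf (ν n)) u) atTop
      (𝓝 (∫ u in p..1, qtl (cdfOf μ) u)) := by
  set c := qtl (cdfOf μ) p
  have hφ : Measurable fun x : ℝ => max (x - c) 0 := by fun_prop
  have hupper : Tendsto (fun n => ∫ u in Ioo p 1, max (qtl (cdfOf (ν n)) u - c) 0) atTop
      (𝓝 (∫ u in Ioo p 1, max (qtl (cdfOf μ) u - c) 0)) := by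
    have hL1 := tendsto_lintegral_enorm_sub_of_tendsto_integral
      (F := fun n u => max (qtl (cdfOf (ν n)) u - c) 0)
      (f := fun u => max (qtl (cdfOf μ) u - c) 0)
      (fun n => Eventually.of_forall fun u => le_max_right _ _)
      (fun n => integrableOn_comp_qtl hφ (hνi n)) (integrableOn_comp_qtl hφ hμi)
      (by filter_upwards [ae_tendsto_qtl hconv] with u hu
          exact (hu.sub_const c).max tendsto_const_nhds)
      (by simpa only [integral_comp_qtl hφ] using hpos)
    simpa only [Measure.restrict_restrict measurableSet_Ioo,
      inter_eq_left.2 (Ioo_subset_Ioo_left hp.1.le)] using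
      tendsto_setIntegral_of_L1 _ (integrableOn_comp_qtl hφ hμi).aestronglyMeasurable
        (Eventually.of_forall fun n => integrableOn_comp_qtl hφ (hνi n)) hL1 (Ioo p 1)
  have hgap : Tendsto (fun n => max (c - qtl (cdfOf (ν n)) p) 0) atTop (𝓝 0) := by
    refine tendsto_order.2 ⟨fun b hb => .of_forall fun n => hb.trans_le (le_max_right _ _),
      fun b hb => ?_⟩
    filter_upwards [eventually_lt_qtl (ν := ν) hconv hp (sub_lt_self c hb)] with n hn
    exact max_lt (by linarith) hb
  have hlower : Tendsto (fun n => ∫ u in Ioo p 1, max (c - qtl (cdfOf (ν n)) u) 0) atTop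
      (𝓝 0) := by
    refine squeeze_zero_norm (fun n => norm_setIntegral_le_of_norm_le_const (by simp)
      fun u hu => norm_max_sub_qtl_le hp hu) ?_
    simpa using hgap.mul_const (volume.real (Ioo p 1))
  have hμlower : ∫ u in Ioo p 1, max (c - qtl (cdfOf μ) u) 0 = 0 :=
    setIntegral_eq_zero_of_forall_eq_zero fun u hu => max_eq_right <| sub_nonpos.2 <|
      monotoneOn_qtl hp ⟨hp.1.trans hu.1, hu.2⟩ hu.1.le
  simp only [intervalIntegral_qtl_eq hp (hνi _), intervalIntegral_qtl_eq hp hμi, hμlower]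
  simpa using (hupper.const_add ((1 - p) * c)).sub hlower

section EmpiricalMeasure

variable {α : Type*} [MeasurableSpace α]

noncomputable def empiricalMeasure (x : ℕ → α) (n : ℕ) : Measure α :=
  (n : ℝ≥0∞)⁻¹ • ∑ i ∈ Finset.range n, Measure.dirac (x i)

instance (x : ℕ → α) (n : ℕ) [NeZero n] : IsProbabilityMeasure (empiricalMeasure x n) := by
  constructor
  simp [empiricalMeasure, ENNReal.inv_mul_cancel (NeZero.ne (n : ℝ≥0∞))]

@[simp]
lemma empiricalMeasure_zero (x : ℕ → α) : empiricalMeasure x 0 = 0 := by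
  simp [empiricalMeasure]

variable [MeasurableSingletonClass α]

lemma integral_empiricalMeasure (x : ℕ → α) (n : ℕ) (f : α → ℝ) :
    ∫ y, f y ∂empiricalMeasure x n = (∑ i ∈ Finset.range n, f (x i)) / n := by
  rw [empiricalMeasure, integral_smul_measure,
    integral_finsetSum_measure fun i _ => integrable_dirac enorm_lt_top]
  simp [integral_dirac, div_eq_inv_mul]

lemma integrable_empiricalMeasure (x : ℕ → α) (n : ℕ) [NeZero n] (f : α → ℝ) :
    Integrable f (empiricalMeasure x n) :=
  (integrable_finsetSum_measure.2 fun _ _ => integrable_dirac enorm_lt_top).smul_measure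
    (ENNReal.inv_ne_top.2 (NeZero.ne _))

end EmpiricalMeasure

lemma empCdf_eq_cdfOf_empiricalMeasure {Ω : Type*} (X : ℕ → Ω → ℝ) (n : ℕ) (ω : Ω) :
    empCdf X n ω = cdfOf (empiricalMeasure (X · ω) n) := by
  funext t
  rw [cdfOf, ← measureReal_def, ← integral_indicator_one measurableSet_Iic,
    integral_empiricalMeasure]
  simp [empCdf, indicator_apply]

lemma measurable_cdfOf_empiricalMeasure {Ω : Type*} [MeasurableSpace Ω] {X : ℕ → Ω → ℝ}
    (hX : ∀ i, Measurable (X i)) (n : ℕ) (t : ℝ) :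
    Measurable fun ω => cdfOf (empiricalMeasure (X · ω) n) t := by
  simp_rw [← empCdf_eq_cdfOf_empiricalMeasure]
  exact (Finset.measurable_sum _ fun i _ =>
    Measurable.ite (hX i measurableSet_Iic) measurable_const measurable_const).div_const _

section StrongLaw

variable {Ω : Type*} [MeasurableSpace Ω] {P : Measure Ω}

theorem ae_tendsto_integral_empiricalMeasure {α : Type*} [MeasurableSpace α]
    [MeasurableSingletonClass α] {μ : Measure α} {X : ℕ → Ω → α} (hX : ∀ i, AEMeasurable (X i) P)
    (hindep : Pairwise fun i j => IndepFun (X i) (X j) P) (hdist : ∀ i, P.map (X i) = μ)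
    {f : α → ℝ} (hf : Measurable f) (hfi : Integrable f μ) :
    ∀ᵐ ω ∂P, Tendsto (fun n => ∫ y, f y ∂empiricalMeasure (X · ω) n) atTop
      (𝓝 (∫ y, f y ∂μ)) := by
  have hident : ∀ i, IdentDistrib (f ∘ X i) (f ∘ X 0) P P := fun i =>
    (IdentDistrib.mk (hX i) (hX 0) (by rw [hdist, hdist])).comp hf
  rw [← hdist 0] at hfi ⊢
  have hint : Integrable (f ∘ X 0) P :=
    (integrable_map_measure hf.aestronglyMeasurable (hX 0)).1 hfi
  filter_upwards [strong_law_ae _ hint (fun i j hij => (hindep hij).comp hf hf) hident]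
    with ω hω
  simpa [integral_empiricalMeasure, integral_map (hX 0) hf.aestronglyMeasurable,
    div_eq_inv_mul] using hω

theorem ae_tendsto_cdfOf_empiricalMeasure {μ : Measure ℝ} [IsFiniteMeasure μ] {X : ℕ → Ω → ℝ}
    (hX : ∀ i, AEMeasurable (X i) P) (hindep : Pairwise fun i j => IndepFun (X i) (X j) P)
    (hdist : ∀ i, P.map (X i) = μ) :
    ∀ᵐ ω ∂P, ∀ r : ℚ,
      Tendsto (fun n => cdfOf (empiricalMeasure (X · ω) n) r) atTop (𝓝 (cdfOf μ r)) :=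
  ae_all_iff.2 fun r => by
    simpa only [integral_indicator_one measurableSet_Iic, cdfOf, measureReal_def] using
      ae_tendsto_integral_empiricalMeasure (f := (Iic (r : ℝ)).indicator 1) hX hindep hdist
        (measurable_one.indicator measurableSet_Iic)
        ((integrable_const (1 : ℝ)).indicator measurableSet_Iic)

end StrongLaw

lemma integrable_max_sub_const {μ : Measure ℝ} [IsFiniteMeasure μ]
    (h : Integrable (fun x => max x 0) μ) (c : ℝ) : Integrable (fun x => max (x - c) 0) μ := by
  refine (h.add (integrable_const |c|)).mono' (by fun_prop) (.of_forall fun x => ?_)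
  rw [Real.norm_of_nonneg (le_max_right _ _), Pi.add_apply]
  exact max_le (by linarith [le_max_left x 0, neg_abs_le c])
    (add_nonneg (le_max_right _ _) (abs_nonneg c))

theorem stmt14_general {Ω : Type*} [MeasurableSpace Ω] (P : Measure Ω) [IsProbabilityMeasure P]
    (μ : Measure ℝ) [IsProbabilityMeasure μ]
    (hμ : Integrable (fun x => max x 0) μ)
    (p : ℝ) (hp : p ∈ Ioo (0 : ℝ) 1)
    (X : ℕ → Ω → ℝ) (hmeas : ∀ i, Measurable (X i))
    (hindep : iIndepFun X P)
    (hdist : ∀ i, Measure.map (X i) P = μ) :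
    TendstoInMeasure P (fun n ω => ∫ u in p..1, qtl (empCdf X n ω) u) atTop
      (fun _ => ∫ u in p..1, qtl (cdfOf μ) u) := by
  have hX : ∀ i, AEMeasurable (X i) P := fun i => (hmeas i).aemeasurable
  have hpair : Pairwise fun i j => IndepFun (X i) (X j) P := fun _ _ hij => hindep.indepFun hij
  have hμc := integrable_max_sub_const hμ (qtl (cdfOf μ) p)
  simp_rw [empCdf_eq_cdfOf_empiricalMeasure]
  refine tendstoInMeasure_of_tendsto_ae (fun n => ?_) ?_
  · cases n with
    | zero => simpa using aestronglyMeasurable_const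
    | succ n =>
      exact (stronglyMeasurable_intervalIntegral_qtl (measurable_cdfOf_empiricalMeasure hmeas _)
        hp.1.le hp.2.le).aestronglyMeasurable
  · filter_upwards [ae_tendsto_cdfOf_empiricalMeasure hX hpair hdist,
      ae_tendsto_integral_empiricalMeasure hX hpair hdist (by fun_prop) hμc] with ω hcdf hpos
    rw [← tendsto_add_atTop_iff_nat 1]
    exact tendsto_intervalIntegral_qtl hp (fun r => (tendsto_add_atTop_iff_nat 1).2 (hcdf r)) hμc
      (fun n => integrable_empiricalMeasure _ _ _) ((tendsto_add_atTop_iff_nat 1).2 hpos)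

/-- for `p ∈ (0,1)`, a cdf `F ∈ F₁⁺` continuous at `x_p := F⁻¹(p)`,
and the empirical cdf `F_n` of independent random variables `X_1, …, X_n`, each with
cdf `F`, `∫_p^1 F_n⁻¹(u) du` converges in probability to `∫_p^1 F⁻¹(u) du`
as `n → ∞`. -/
theorem stmt14 {Ω : Type*} [MeasurableSpace Ω] (P : Measure Ω) [IsProbabilityMeasure P]
    (μ : Measure ℝ) [IsProbabilityMeasure μ]
    (hμ : Integrable (fun x => max x 0) μ)
    (p : ℝ) (hp : p ∈ Ioo (0 : ℝ) 1)
    (hcont : ContinuousAt (cdfOf μ) (qtl (cdfOf μ) p))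
    (X : ℕ → Ω → ℝ) (hmeas : ∀ i, Measurable (X i))
    (hindep : iIndepFun X P)
    (hdist : ∀ i, Measure.map (X i) P = μ) :
    TendstoInMeasure P (fun n ω => ∫ u in p..1, qtl (empCdf X n ω) u) atTop
      (fun _ => ∫ u in p..1, qtl (cdfOf μ) u) :=
  stmt14_general P μ hμ p hp X hmeas hindep hdist
end

section
/- Let p ∈ (0,1) and F ∈ F_2^+. Then the variance σ²_{F,p} of the random variable ∫_{F^{-1}(p)}^∞ (1{X ≤ x} − F(x)) dx, where X ~ F, is finite. -/
open MeasureTheory ProbabilityTheory Filter Set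

/-- The random variable `t ↦ ∫_{F⁻¹(p)}^∞ (1{t ≤ x} − F(x)) dx`, i.e. the value of
`∫_{F⁻¹(p)}^∞ (1{X ≤ x} − F(x)) dx` when `X = t`. Its variance under `μ` (= `X ~ F`)
is `σ²_{F,p}`. -/
noncomputable def infl (μ : Measure ℝ) (p : ℝ) (t : ℝ) : ℝ :=
  ∫ x in Ioi (qtl (cdfOf μ) p), ((if t ≤ x then (1 : ℝ) else 0) - cdfOf μ x)

lemma myCdf_mono (μ : Measure ℝ) [IsProbabilityMeasure μ] : Monotone (cdfOf μ) := by
  intro a b hab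
  exact ENNReal.toReal_mono (measure_ne_top _ _) (measure_mono (Iic_subset_Iic.2 hab))

lemma myCdf_nonneg (μ : Measure ℝ) (x : ℝ) : 0 ≤ cdfOf μ x := ENNReal.toReal_nonneg

lemma myCdf_le_one (μ : Measure ℝ) [IsProbabilityMeasure μ] (x : ℝ) : cdfOf μ x ≤ 1 := by
  have := measure_mono (subset_univ (Iic x)) (μ := μ)
  simpa [cdfOf] using ENNReal.toReal_mono (measure_ne_top _ _) this

lemma myOne_sub_cdf (μ : Measure ℝ) [IsProbabilityMeasure μ] (x : ℝ) :
    1 - cdfOf μ x = (μ (Ioi x)).toReal := by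
  have h : μ (Iic x) + μ (Ioi x) = 1 := by
    rw [← measure_union (by simp [disjoint_left]) measurableSet_Ioi, Iic_union_Ioi,
      measure_univ]
  have h1 : (μ (Iic x)).toReal + (μ (Ioi x)).toReal = 1 := by
    rw [← ENNReal.toReal_add (measure_ne_top _ _) (measure_ne_top _ _), h]; simp
  simp [cdfOf]; linarith

lemma posPart_int (μ : Measure ℝ) [IsProbabilityMeasure μ]
    (hμ : Integrable (fun x => (max x 0) ^ 2) μ) :
    Integrable (fun x => max x 0) μ := by
  refine (hμ.add (integrable_const 1)).mono
    (measurable_id.max measurable_const).aestronglyMeasurable (ae_of_all _ fun x => ?_)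
  have h0 : (0:ℝ) ≤ max x 0 := le_max_right _ _
  have h1 : max x 0 ≤ (max x 0)^2 + 1 := by nlinarith
  have h2 : (0:ℝ) ≤ (max x 0)^2 + 1 := by positivity
  simp only [Pi.add_apply, Real.norm_eq_abs, abs_of_nonneg h0, abs_of_nonneg h2]
  exact h1

lemma tail_lintegral (μ : Measure ℝ) [IsProbabilityMeasure μ]
    (hint : Integrable (fun x => max x 0) μ) (q : ℝ) :
    ∫⁻ x in Ioi q, μ (Ioi x) < ⊤ := by
  have key : ∫⁻ a, ENNReal.ofReal (max (a - q) 0) ∂μ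
      = ∫⁻ t in Ioi 0, μ {a : ℝ | t < max (a - q) 0} :=
    lintegral_eq_lintegral_meas_lt μ (ae_of_all _ fun a => le_max_right _ _)
      ((measurable_id.sub measurable_const).max measurable_const).aemeasurable
  have hset : ∀ t ∈ Ioi (0:ℝ), μ {a : ℝ | t < max (a - q) 0} = μ (Ioi (q + t)) := by
    intro t ht
    congr 1
    ext a
    simp only [mem_setOf_eq, mem_Ioi, lt_max_iff]
    constructor
    · rintro (h | h)
      · linarith
      · exact absurd ht.out (by linarith)
    · intro h; left; linarith
  have hintq : Integrable (fun a => max (a - q) 0) μ := by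
    refine (hint.add (integrable_const |q|)).mono
      (((measurable_id.sub measurable_const).max measurable_const).aestronglyMeasurable)
      (ae_of_all _ fun a => ?_)
    have hb : max (a - q) 0 ≤ max a 0 + |q| := by
      rcases le_or_gt (a - q) 0 with h | h
      · rw [max_eq_right h]; positivity
      · rw [max_eq_left h.le]
        have h1 := le_max_left a (0:ℝ)
        have h2 := neg_abs_le q
        linarith
    have h2 : (0:ℝ) ≤ max a 0 + |q| := by positivity
    simp only [Pi.add_apply, Real.norm_eq_abs, abs_of_nonneg (le_max_right (a-q) (0:ℝ)),
      abs_of_nonneg h2]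
    exact hb
  have hlhs : ∫⁻ a, ENNReal.ofReal (max (a - q) 0) ∂μ < ⊤ :=
    (hasFiniteIntegral_iff_ofReal (ae_of_all _ fun a => le_max_right _ _)).1 hintq.2
  rw [key, setLIntegral_congr_fun measurableSet_Ioi hset] at hlhs
  have trans : ∫⁻ x in Ioi q, μ (Ioi x) = ∫⁻ t in Ioi 0, μ (Ioi (q + t)) := by
    rw [← lintegral_indicator measurableSet_Ioi _, ← lintegral_indicator measurableSet_Ioi _]
    rw [← lintegral_add_right_eq_self
      (fun x => (Ioi q).indicator (fun x => μ (Ioi x)) x) q]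
    apply lintegral_congr
    intro t
    by_cases ht : t ∈ Ioi (0:ℝ)
    · rw [indicator_of_mem (by simpa [mem_Ioi] using by linarith [ht.out] : t + q ∈ Ioi q),
        indicator_of_mem ht]
      ring_nf
    · rw [indicator_of_notMem (by simp only [mem_Ioi] at *; intro h; exact ht (by linarith)),
        indicator_of_notMem ht]
  rw [trans]
  exact hlhs

lemma tail_intOn (μ : Measure ℝ) [IsProbabilityMeasure μ] {q : ℝ}
    (hint : ∫⁻ x in Ioi q, μ (Ioi x) < ⊤) :
    IntegrableOn (fun x => 1 - cdfOf μ x) (Ioi q) volume := by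
  constructor
  · exact ((measurable_const.sub (myCdf_mono μ).measurable).aestronglyMeasurable)
  · rw [hasFiniteIntegral_iff_ofReal (ae_of_all _ fun x => by
      simpa using myCdf_le_one μ x)]
    calc ∫⁻ x in Ioi q, ENNReal.ofReal (1 - cdfOf μ x)
        = ∫⁻ x in Ioi q, μ (Ioi x) := by
          apply lintegral_congr
          intro x
          rw [myOne_sub_cdf, ENNReal.ofReal_toReal (measure_ne_top _ _)]
      _ < ⊤ := hint

lemma integrand_meas (μ : Measure ℝ) [IsProbabilityMeasure μ] (t : ℝ) :
    Measurable (fun x => (if t ≤ x then (1:ℝ) else 0) - cdfOf μ x) := by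
  refine Measurable.sub ?_ (myCdf_mono μ).measurable
  exact Measurable.ite measurableSet_Ici measurable_const measurable_const

lemma integrand_abs_le (μ : Measure ℝ) [IsProbabilityMeasure μ] (t x : ℝ) :
    |(if t ≤ x then (1:ℝ) else 0) - cdfOf μ x| ≤ 1 := by
  have h1 := myCdf_nonneg μ x
  have h2 := myCdf_le_one μ x
  rw [abs_sub_le_iff]
  constructor <;> split_ifs <;> norm_num <;> linarith

lemma intOn_Ioc (μ : Measure ℝ) [IsProbabilityMeasure μ] (t a b : ℝ) :
    IntegrableOn (fun x => (if t ≤ x then (1:ℝ) else 0) - cdfOf μ x) (Ioc a b) volume := by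
  refine Measure.integrableOn_of_bounded (M := 1) measure_Ioc_lt_top.ne
    (integrand_meas μ t).aestronglyMeasurable (ae_of_all _ fun x => ?_)
  simpa [Real.norm_eq_abs] using integrand_abs_le μ t x

lemma intOn_Ioi (μ : Measure ℝ) [IsProbabilityMeasure μ] {q : ℝ} (t : ℝ) (hm : max t q ≤ m)
    (htail : IntegrableOn (fun x => 1 - cdfOf μ x) (Ioi q) volume) :
    IntegrableOn (fun x => (if t ≤ x then (1:ℝ) else 0) - cdfOf μ x) (Ioi m) volume := by
  have hsub : Ioi m ⊆ Ioi q := Ioi_subset_Ioi ((le_max_right t q).trans hm)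
  refine (htail.mono_set hsub).congr_fun ?_ measurableSet_Ioi
  intro x hx
  have hxt : t ≤ x := ((le_max_left t q).trans hm).trans (le_of_lt hx)
  simp [hxt]

lemma integrand_intOn (μ : Measure ℝ) [IsProbabilityMeasure μ] {q : ℝ} (t : ℝ)
    (htail : IntegrableOn (fun x => 1 - cdfOf μ x) (Ioi q) volume) :
    IntegrableOn (fun x => (if t ≤ x then (1:ℝ) else 0) - cdfOf μ x) (Ioi q) volume := by
  rw [← Ioc_union_Ioi_eq_Ioi (le_max_right t q)]
  exact (intOn_Ioc μ t q (max t q)).union (intOn_Ioi μ t le_rfl htail)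

lemma J_bound (μ : Measure ℝ) [IsProbabilityMeasure μ] {q : ℝ} (t : ℝ)
    (htail : IntegrableOn (fun x => 1 - cdfOf μ x) (Ioi q) volume) :
    |∫ x in Ioi q, ((if t ≤ x then (1:ℝ) else 0) - cdfOf μ x)|
      ≤ (max t q - q) + ∫ x in Ioi q, (1 - cdfOf μ x) := by
  set m := max t q with hm
  have hqm : q ≤ m := le_max_right _ _
  have hsplit : ∫ x in Ioi q, ((if t ≤ x then (1:ℝ) else 0) - cdfOf μ x)
      = (∫ x in Ioc q m, ((if t ≤ x then (1:ℝ) else 0) - cdfOf μ x))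
        + ∫ x in Ioi m, ((if t ≤ x then (1:ℝ) else 0) - cdfOf μ x) := by
    rw [← Ioc_union_Ioi_eq_Ioi hqm,
      setIntegral_union (Set.Ioc_disjoint_Ioi le_rfl) measurableSet_Ioi
        (intOn_Ioc μ t q m) (intOn_Ioi μ t le_rfl htail)]
  rw [hsplit]
  have h1 : |∫ x in Ioc q m, ((if t ≤ x then (1:ℝ) else 0) - cdfOf μ x)| ≤ m - q := by
    have := norm_setIntegral_le_of_norm_le_const (μ := volume) (C := 1) (s := Ioc q m)
      measure_Ioc_lt_top
      (f := fun x => (if t ≤ x then (1:ℝ) else 0) - cdfOf μ x)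
      (fun x _ => by simpa [Real.norm_eq_abs] using integrand_abs_le μ t x)
    rw [Real.norm_eq_abs] at this
    calc |∫ x in Ioc q m, ((if t ≤ x then (1:ℝ) else 0) - cdfOf μ x)|
        ≤ 1 * (volume (Ioc q m)).toReal := this
      _ = m - q := by
          rw [one_mul, Real.volume_Ioc, ENNReal.toReal_ofReal (by linarith)]
  have heq : ∫ x in Ioi m, ((if t ≤ x then (1:ℝ) else 0) - cdfOf μ x)
      = ∫ x in Ioi m, (1 - cdfOf μ x) := by
    apply setIntegral_congr_fun measurableSet_Ioi
    intro x hx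
    have hxt : t ≤ x := (le_max_left t q).trans (le_of_lt hx)
    simp [hxt]
  have h2 : |∫ x in Ioi m, ((if t ≤ x then (1:ℝ) else 0) - cdfOf μ x)|
      ≤ ∫ x in Ioi q, (1 - cdfOf μ x) := by
    rw [heq, abs_of_nonneg (setIntegral_nonneg measurableSet_Ioi
      (fun x _ => by linarith [myCdf_le_one μ x]))]
    exact setIntegral_mono_set htail
      (ae_of_all _ fun x => by simpa using myCdf_le_one μ x)
      (HasSubset.Subset.eventuallyLE (Ioi_subset_Ioi hqm))
  calc _ ≤ _ := abs_add_le _ _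
    _ ≤ (m - q) + ∫ x in Ioi q, (1 - cdfOf μ x) := add_le_add h1 h2

/-- for `p ∈ (0,1)` and `F ∈ F₂⁺` (i.e. `E((X⁺)²) < ∞` for `X ~ F`),
the variance `σ²_{F,p}` of the random variable `∫_{F⁻¹(p)}^∞ (1{X ≤ x} − F(x)) dx`,
where `X ~ F`, is finite. -/
theorem stmt18 (μ : Measure ℝ) [IsProbabilityMeasure μ]
    (hμ : Integrable (fun x => (max x 0) ^ 2) μ)
    (p : ℝ) (hp : p ∈ Ioo (0 : ℝ) 1) :
    evariance (infl μ p) μ < ⊤ := by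
  set q := qtl (cdfOf μ) p with hq
  have hint : Integrable (fun x => max x 0) μ := posPart_int μ hμ
  have htail : IntegrableOn (fun x => 1 - cdfOf μ x) (Ioi q) volume :=
    tail_intOn μ (tail_lintegral μ hint q)
  set C := ∫ x in Ioi q, (1 - cdfOf μ x) with hC
  have hC0 : 0 ≤ C := setIntegral_nonneg measurableSet_Ioi
    (fun x _ => by linarith [myCdf_le_one μ x])
  -- antitone hence measurable
  have hanti : Antitone (infl μ p) := by
    intro t₁ t₂ h12
    apply setIntegral_mono_on (integrand_intOn μ t₂ htail) (integrand_intOn μ t₁ htail)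
      measurableSet_Ioi
    intro x _
    have : (if t₂ ≤ x then (1:ℝ) else 0) ≤ (if t₁ ≤ x then (1:ℝ) else 0) := by
      split_ifs with ha hb hb <;> norm_num
      exact hb (h12.trans ha)
    linarith
  have hmeas : Measurable (infl μ p) := hanti.measurable
  -- L² bound
  have hbound : ∀ t, |infl μ p t| ≤ max (t - q) 0 + C := by
    intro t
    have := J_bound μ t htail
    have hmax : max t q - q = max (t - q) 0 := by
      rcases le_total t q with h | h
      · rw [max_eq_right h, max_eq_right (by linarith)]; ring
      · rw [max_eq_left h, max_eq_left (by linarith)]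
    rw [hmax] at this
    exact this
  have hg : MemLp (fun t => max (t - q) 0 + C) 2 μ := by
    have hgm : MemLp (fun t => max (t - q) 0) 2 μ := by
      have hfm : AEStronglyMeasurable (fun t : ℝ => max (t - q) 0) μ :=
        ((measurable_id.sub measurable_const).max measurable_const).aestronglyMeasurable
      rw [memLp_two_iff_integrable_sq hfm]
      refine ((hμ.const_mul 2).add (integrable_const (2 * q ^ 2))).mono
        ((((measurable_id.sub measurable_const).max measurable_const).pow_const 2).aestronglyMeasurable)
        (ae_of_all _ fun t => ?_)
      have hb : max (t - q) 0 ≤ max t 0 + |q| := by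
        rcases le_or_gt (t - q) 0 with h | h
        · rw [max_eq_right h]; positivity
        · rw [max_eq_left h.le]
          have h1 := le_max_left t (0:ℝ)
          have h2 := neg_abs_le q
          linarith
      have h0 : (0:ℝ) ≤ max (t - q) 0 := le_max_right _ _
      have h0' : (0:ℝ) ≤ max t 0 := le_max_right _ _
      have hsq : (max (t - q) 0) ^ 2 ≤ 2 * (max t 0) ^ 2 + 2 * q ^ 2 := by
        have hq2 : |q| ^ 2 = q ^ 2 := sq_abs q
        have ha : (max (t - q) 0) ^ 2 ≤ (max t 0 + |q|) ^ 2 := by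
          apply pow_le_pow_left₀ h0 hb
        nlinarith [sq_nonneg (max t 0 - |q|), abs_nonneg q]
      have hrhs : (0:ℝ) ≤ 2 * (max t 0) ^ 2 + 2 * q ^ 2 := by positivity
      simp only [Pi.add_apply, Real.norm_eq_abs, abs_of_nonneg (by positivity : (0:ℝ) ≤ (max (t-q) 0)^2),
        abs_of_nonneg hrhs]
      exact hsq
    exact hgm.add (memLp_const C)
  have hmem : MemLp (infl μ p) 2 μ := by
    refine hg.of_le hmeas.aestronglyMeasurable (ae_of_all _ fun t => ?_)
    have h0 : (0:ℝ) ≤ max (t - q) 0 + C := add_nonneg (le_max_right _ _) hC0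
    rw [Real.norm_eq_abs, Real.norm_eq_abs, abs_of_nonneg h0]
    exact hbound t
  exact hmem.evariance_lt_top
end
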